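/- arXiv:1611.09014 — 2 statements merged into one kernel-verified Lean document; each statement's English description precedes it below -/
import Mathlib

section
/- Soundness of the range-restricting transformation rr: for every clause set M, if M is satisfiable then rr(M) is satisfiable. -/
namespace BUMG

/-- First-order terms over function symbols `F`, with variables indexed by `ℕ`. -/
inductive Term (F : Type) : Type where
  | var : ℕ → Term F
  | app : F → List (Term F) → Term F

namespace Term
variable {F : Type}

/-- The list of variables occurring in a term. -/
def vars : Term F → List ℕ
  | var n => [n]
  | app _ ts => ts.attach.flatMap (fun t => vars t.1)
decreasing_by simp_wf; have := List.sizeOf_lt_of_mem t.2; omega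

/-- The function symbols (with the arity of the occurrence) occurring in a term. -/
def funcs : Term F → List (F × ℕ)
  | var _ => []
  | app f ts => (f, ts.length) :: ts.attach.flatMap (fun t => funcs t.1)
decreasing_by simp_wf; have := List.sizeOf_lt_of_mem t.2; omega

/-- Applying a substitution to a term. -/
def subst (g : ℕ → Term F) : Term F → Term F
  | var n => g n
  | app f ts => app f (ts.attach.map (fun t => subst g t.1))
decreasing_by simp_wf; have := List.sizeOf_lt_of_mem t.2; omega

/-- The number of occurrences of symbols (variables and function symbols) in a term. -/
def size : Term F → ℕ
  | var _ => 1
  | app _ ts => 1 + (ts.attach.map (fun t => size t.1)).sum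
decreasing_by simp_wf; have := List.sizeOf_lt_of_mem t.2; omega

/-- A term is ground iff it contains no variables. -/
def IsGround (t : Term F) : Prop := t.vars = []

def isVar : Term F → Bool
  | var _ => true
  | app _ _ => false

/-- A proper functional term is a term that is neither a variable nor a constant. -/
def isPF : Term F → Bool
  | app _ (_ :: _) => true
  | _ => false

/-- The subterm relation. -/
inductive Subterm : Term F → Term F → Prop
  | refl (t : Term F) : Subterm t t
  | app {s t : Term F} {f : F} {ts : List (Term F)} :
      t ∈ ts → Subterm s t → Subterm s (app f ts)

end Term

/-- Atoms over predicate symbols `P` and function symbols `F`. -/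
structure Atom (P F : Type) where
  pred : P
  args : List (Term F)

namespace Atom
variable {P F : Type}

def subst (g : ℕ → Term F) (a : Atom P F) : Atom P F := ⟨a.pred, a.args.map (Term.subst g)⟩
def vars (a : Atom P F) : List ℕ := a.args.flatMap Term.vars
def IsGround (a : Atom P F) : Prop := a.vars = []
def funcs (a : Atom P F) : List (F × ℕ) := a.args.flatMap Term.funcs
/-- Whether the atom contains a proper functional term. -/
def hasPF (a : Atom P F) : Bool := a.args.any Term.isPF
def size (a : Atom P F) : ℕ := 1 + (a.args.map Term.size).sum

end Atom

/-- A clause `H₁ ∨ ... ∨ Hₘ ← B₁ ∧ ... ∧ Bₖ` with head atoms `heads`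
and body atoms `body`. -/
structure Clause (P F : Type) where
  heads : List (Atom P F)
  body : List (Atom P F)

namespace Clause
variable {P F : Type}

def atoms (C : Clause P F) : List (Atom P F) := C.heads ++ C.body
def vars (C : Clause P F) : List ℕ := C.atoms.flatMap Atom.vars
def bodyVars (C : Clause P F) : List ℕ := C.body.flatMap Atom.vars
def headVars (C : Clause P F) : List ℕ := C.heads.flatMap Atom.vars
def maxVar (C : Clause P F) : ℕ := C.vars.foldr max 0
def subst (g : ℕ → Term F) (C : Clause P F) : Clause P F :=
  ⟨C.heads.map (Atom.subst g), C.body.map (Atom.subst g)⟩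
/-- The predicate symbols (with the arity of the occurrence) occurring in a clause. -/
def preds (C : Clause P F) : List (P × ℕ) := C.atoms.map (fun a => (a.pred, a.args.length))
/-- The function symbols (with the arity of the occurrence) occurring in a clause. -/
def funcs (C : Clause P F) : List (F × ℕ) := C.atoms.flatMap Atom.funcs
/-- The number of occurrences of symbols in a clause. -/
def size (C : Clause P F) : ℕ := (C.atoms.map Atom.size).sum

/-- A clause is range-restricted iff every variable occurring in it occurs in its body. -/
def RangeRestricted (C : Clause P F) : Prop := ∀ v ∈ C.vars, v ∈ C.bodyVars

/-- A Bernays–Schönfinkel clause: every functional term occurring in it is a constant. -/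
def BS (C : Clause P F) : Prop := ∀ fn ∈ C.funcs, fn.2 = 0

end Clause

/-- A clause set is range-restricted iff all its clauses are. -/
def RangeRestrictedSet {P F : Type} (M : Set (Clause P F)) : Prop :=
  ∀ C ∈ M, C.RangeRestricted

/-- The predicate symbols (with arities) occurring in a clause set. -/
def predsOf {P F : Type} (M : Set (Clause P F)) : Set (P × ℕ) :=
  { pn | ∃ C ∈ M, pn ∈ C.preds }

/-- The function symbols (with arities) occurring in a clause set. -/
def funcsOf {P F : Type} (M : Set (Clause P F)) : Set (F × ℕ) :=
  { fn | ∃ C ∈ M, fn ∈ C.funcs }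

/-- A signature: a set of predicate symbols with arities and
a set of function symbols with arities. -/
structure Sig (P F : Type) where
  preds : Set (P × ℕ)
  funcs : Set (F × ℕ)

/-- The clause set `M` is well-formed over the signature `σ`: all symbols occurring in `M`
belong to `σ` (with matching arities). -/
def WFSet {P F : Type} (σ : Sig P F) (M : Set (Clause P F)) : Prop :=
  ∀ C ∈ M, (∀ pn ∈ C.preds, pn ∈ σ.preds) ∧ (∀ fn ∈ C.funcs, fn ∈ σ.funcs)

/-- The total number of occurrences of symbols in a clause set. -/
noncomputable def setSize {P F : Type} (M : Set (Clause P F)) : ℕ :=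
  ∑ᶠ C ∈ M, C.size

/-! ### Herbrand semantics -/

/-- A substitution is ground iff it maps every variable to a ground term. -/
def GroundSubst {F : Type} (g : ℕ → Term F) : Prop := ∀ n, (g n).IsGround

/-- A (Herbrand) interpretation `I` (a set of ground atoms) satisfies a clause iff
it satisfies every ground instance of it. -/
def satClause {P F : Type} (I : Set (Atom P F)) (C : Clause P F) : Prop :=
  ∀ g : ℕ → Term F, GroundSubst g →
    (∀ a ∈ C.body, a.subst g ∈ I) → ∃ a ∈ C.heads, a.subst g ∈ I

/-- A clause set is satisfiable iff some Herbrand interpretation (a set of ground atoms)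
satisfies every ground instance of every clause of it. -/
def Satisfiable {P F : Type} (M : Set (Clause P F)) : Prop :=
  ∃ I : Set (Atom P F), (∀ a ∈ I, a.IsGround) ∧ ∀ C ∈ M, satClause I C

/-! ### Equality axioms and E-satisfiability -/

/-- The equality atom `s ≈ t` (`eqP` being the distinguished equality predicate `≈`). -/
def eqAtom {P F : Type} (eqP : P) (s t : Term F) : Atom P F := ⟨eqP, [s, t]⟩

def rangeVars {F : Type} (n : ℕ) : List (Term F) := (List.range n).map Term.var

def xsList {F : Type} (n : ℕ) : List (Term F) := (List.range n).map (fun i => Term.var (2*i))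
def ysList {F : Type} (n : ℕ) : List (Term F) := (List.range n).map (fun i => Term.var (2*i+1))
def eqConjList {P F : Type} (eqP : P) (n : ℕ) : List (Atom P F) :=
  (List.range n).map (fun i => eqAtom eqP (Term.var (2*i)) (Term.var (2*i+1)))

/-- The equality axioms `EAX`: `≈` is reflexive, symmetric, transitive and compatible with
the given function and predicate symbols. -/
def EAX {P F : Type} (eqP : P) (Ps : Set (P × ℕ)) (Fs : Set (F × ℕ)) : Set (Clause P F) :=
  { ⟨[eqAtom eqP (Term.var 0) (Term.var 0)], []⟩,
    ⟨[eqAtom eqP (Term.var 1) (Term.var 0)], [eqAtom eqP (Term.var 0) (Term.var 1)]⟩,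
    ⟨[eqAtom eqP (Term.var 0) (Term.var 2)],
      [eqAtom eqP (Term.var 0) (Term.var 1), eqAtom eqP (Term.var 1) (Term.var 2)]⟩ } ∪
  { D | ∃ fn ∈ Fs,
      D = ⟨[eqAtom eqP (Term.app fn.1 (xsList fn.2)) (Term.app fn.1 (ysList fn.2))],
           eqConjList eqP fn.2⟩ } ∪
  { D | ∃ pn ∈ Ps,
      D = ⟨[⟨pn.1, ysList pn.2⟩], ⟨pn.1, xsList pn.2⟩ :: eqConjList eqP pn.2⟩ }

/-- A clause set `M` is E-satisfiable iff `M` together with the equality axioms for the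
symbols occurring in `M` is satisfiable. -/
def ESatisfiable {P F : Type} (eqP : P) (M : Set (Clause P F)) : Prop :=
  Satisfiable (M ∪ EAX eqP (predsOf M) (funcsOf M))

/-! ### Range-restricting transformations -/

/-- The atom `dom(t)`. -/
def domAtom {P F : Type} (domP : P) (t : Term F) : Atom P F := ⟨domP, [t]⟩

/-- The term `c` for a constant `c`. -/
def cTerm {F : Type} (c : F) : Term F := Term.app c []

/-- The clause `dom(c) ← ⊤`. -/
def domcClause {P F : Type} (domP : P) (c : F) : Clause P F :=
  ⟨[domAtom domP (cTerm c)], []⟩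

/-- Range-restricting a clause (Step (2) of `crr`, Step (3) of `rr`):
`H ← B` becomes `H ← B ∧ dom(x₁) ∧ ... ∧ dom(xₖ)` where `x₁,...,xₖ` are the variables
occurring in the head but not in the body. -/
def rangeRestrictClause {P F : Type} (domP : P) (C : Clause P F) : Clause P F :=
  ⟨C.heads, C.body ++
    ((C.headVars.filter (fun v => v ∉ C.bodyVars)).dedup).map
      (fun v => domAtom domP (Term.var v))⟩

/-- The argument list of the term abstraction of an atom: argument positions holding
non-variable terms are replaced by fresh variables. -/
def abstrArgs {F : Type} (base : ℕ) (ts : List (Term F)) : List (Term F) :=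
  ts.mapIdx (fun i t => if t.isVar then t else Term.var (base + i))

/-- Step (2) of the `rr` transformation: for each clause `H ← B` of `M`, each body atom
`P(t₁,...,tₙ)` of `B` with term abstraction `P(s₁,...,sₙ)` and abstraction substitution `α`,
the clauses `dom(xᵢ)α ← P(s₁,...,sₙ)` for every `xᵢ` in the domain of `α`. -/
def step2Set {P F : Type} (domP : P) (M : Set (Clause P F)) : Set (Clause P F) :=
  { D | ∃ C ∈ M, ∃ a ∈ C.body, ∃ i : Fin a.args.length,
        (a.args.get i).isVar = false ∧
        D = ⟨[domAtom domP (a.args.get i)],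
             [⟨a.pred, abstrArgs (C.maxVar + 1) a.args⟩]⟩ }

/-- Step (4) of the `rr` transformation: the clauses `dom(xᵢ) ← P(x₁,...,xₙ)` for every
`n`-ary predicate symbol `P` of the signature and every `1 ≤ i ≤ n`. -/
def step4Set {P F : Type} (domP : P) (Ps : Set (P × ℕ)) : Set (Clause P F) :=
  { D | ∃ pn ∈ Ps, ∃ i, i < pn.2 ∧
        D = ⟨[domAtom domP (Term.var i)], [⟨pn.1, rangeVars pn.2⟩]⟩ }

/-- Step (5) of the `rr` transformation: the clauses `dom(xᵢ) ← dom(f(x₁,...,xₙ))` for every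
`n`-ary function symbol `f` of the signature and every `1 ≤ i ≤ n`. -/
def step5Set {P F : Type} (domP : P) (Fs : Set (F × ℕ)) : Set (Clause P F) :=
  { D | ∃ fn ∈ Fs, ∃ i, i < fn.2 ∧
        D = ⟨[domAtom domP (Term.var i)],
             [domAtom domP (Term.app fn.1 (rangeVars fn.2))]⟩ }

/-- The new range-restricting transformation `rr` (over the signature `σ`, with fresh unary
predicate symbol `dom` and constant `c`): the clauses of `M`, the clause `dom(c) ← ⊤` and
the Step-(2) clauses, all range-restricted by Step (3), together with the Step-(4) and
Step-(5) clauses. -/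
def rr {P F : Type} [DecidableEq P] [DecidableEq F] (σ : Sig P F) (domP : P) (c : F)
    (M : Set (Clause P F)) : Set (Clause P F) :=
  (rangeRestrictClause domP '' (M ∪ {domcClause domP c} ∪ step2Set domP M))
  ∪ step4Set domP σ.preds ∪ step5Set domP σ.funcs

/-- Step (3) of the classical transformation `crr`: the clauses
`dom(f(x₁,...,xₙ)) ← dom(x₁) ∧ ... ∧ dom(xₙ)` enumerating the Herbrand universe. -/
def crrStep3 {P F : Type} (domP : P) (Fs : Set (F × ℕ)) : Set (Clause P F) :=
  { D | ∃ fn ∈ Fs,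
        D = ⟨[domAtom domP (Term.app fn.1 (rangeVars fn.2))],
             (List.range fn.2).map (fun i => domAtom domP (Term.var i))⟩ }

/-- The classical range-restricting transformation `crr`. -/
def crr {P F : Type} [DecidableEq P] [DecidableEq F] (σ : Sig P F) (domP : P) (c : F)
    (M : Set (Clause P F)) : Set (Clause P F) :=
  (rangeRestrictClause domP '' (M ∪ {domcClause domP c})) ∪ crrStep3 domP σ.funcs

/-! ### Shifting -/

/-- Partial flattening of the arguments of a non-equational body atom: top-level proper
functional terms are replaced by fresh variables. The `j`-th body atom uses the fresh
variables `base + Nat.pair j i`. -/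
def pfArgs {P F : Type} [DecidableEq P] (eqP : P) (base j : ℕ) (a : Atom P F) : Atom P F :=
  if a.pred = eqP then a
  else ⟨a.pred, a.args.mapIdx (fun i t => if t.isPF then Term.var (base + Nat.pair j i) else t)⟩

/-- The equations `tᵢ ≈ xᵢ` introduced by partially flattening a body atom. -/
def pfEqs {P F : Type} [DecidableEq P] (eqP : P) (base j : ℕ) (a : Atom P F) :
    List (Atom P F) :=
  if a.pred = eqP then []
  else (a.args.mapIdx (fun i t => (i, t))).filterMap
        (fun p => if p.2.isPF then
            some (eqAtom eqP p.2 (Term.var (base + Nat.pair j p.1))) else none)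

/-- Partial flattening of a clause. -/
def pfClause {P F : Type} [DecidableEq P] (eqP : P) (C : Clause P F) : Clause P F :=
  ⟨C.heads,
   C.body.mapIdx (fun j a => pfArgs eqP (C.maxVar + 1) j a) ++
   (C.body.mapIdx (fun j a => pfEqs eqP (C.maxVar + 1) j a)).flatten⟩

/-- The reflexivity unit clause `x ≈ x ← ⊤`. -/
def reflClause {P F : Type} (eqP : P) : Clause P F :=
  ⟨[eqAtom eqP (Term.var 0) (Term.var 0)], []⟩

/-- The partial flattening transformation `pf`. -/
def pf {P F : Type} [DecidableEq P] (eqP : P) (M : Set (Clause P F)) : Set (Clause P F) :=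
  pfClause eqP '' M ∪ {reflClause eqP}

/-- The atom `P̄(t₁,...,tₙ)` for the atom `P(t₁,...,tₙ)`, where `bar` maps each predicate
symbol `P` to the fresh predicate symbol `P̄` uniquely associated with it. -/
def barAtom {P F : Type} (bar : P → P) (a : Atom P F) : Atom P F := ⟨bar a.pred, a.args⟩

/-- Basic shifting of a clause: the body atoms containing a proper functional term are
moved, negated (via `bar`), into the head. -/
def bsClause {P F : Type} (bar : P → P) (C : Clause P F) : Clause P F :=
  ⟨C.heads ++ (C.body.filter (fun a => a.hasPF)).map (barAtom bar),
   C.body.filter (fun a => !a.hasPF)⟩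

/-- The predicate symbols (with arities) of shifted atoms of `M`. -/
def shiftedPreds {P F : Type} (M : Set (Clause P F)) : Set (P × ℕ) :=
  { pn | ∃ C ∈ M, ∃ a ∈ C.body, a.hasPF = true ∧ pn = (a.pred, a.args.length) }

/-- The basic shifting transformation `bs`: shift deep body atoms and add the shifted atom
consistency clauses `⊥ ← P(x₁,...,xₙ) ∧ P̄(x₁,...,xₙ)`. -/
def bs {P F : Type} (bar : P → P) (M : Set (Clause P F)) : Set (Clause P F) :=
  bsClause bar '' M ∪
  { D | ∃ pn ∈ shiftedPreds M,
        D = ⟨[], [⟨pn.1, rangeVars pn.2⟩, ⟨bar pn.1, rangeVars pn.2⟩]⟩ }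

/-- The shifting transformation: `sh(M) = bs(pf(M))`. -/
def sh {P F : Type} [DecidableEq P] (eqP : P) (bar : P → P) (M : Set (Clause P F)) :
    Set (Clause P F) :=
  bs bar (pf eqP M)

/-! ### Blocking -/

/-- The head `x ≈ y ∨ x ≉ y` of the blocking clauses. -/
def blockSplitHead {P F : Type} (eqP neqP : P) : List (Atom P F) :=
  [eqAtom eqP (Term.var 0) (Term.var 1), eqAtom neqP (Term.var 0) (Term.var 1)]

/-- The clause `⊥ ← x ≈ y ∧ x ≉ y`. -/
def eqNeqBot {P F : Type} (eqP neqP : P) : Clause P F :=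
  ⟨[], [eqAtom eqP (Term.var 0) (Term.var 1), eqAtom neqP (Term.var 0) (Term.var 1)]⟩

/-- The unrestricted domain blocking transformation `blud`. -/
def blud {P F : Type} (domP eqP neqP : P) (M : Set (Clause P F)) : Set (Clause P F) :=
  M ∪ { ⟨blockSplitHead eqP neqP, [domAtom domP (Term.var 0), domAtom domP (Term.var 1)]⟩,
        eqNeqBot eqP neqP }

/-- The atom `sub(s,t)`. -/
def subAtom {P F : Type} (subP : P) (s t : Term F) : Atom P F := ⟨subP, [s, t]⟩

/-- The axioms describing the subterm relationship: `sub(x,x) ← dom(x)` and, for every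
`n`-ary function symbol `f` of the signature and `1 ≤ i ≤ n`,
`sub(x, f(x₁,...,xₙ)) ← sub(x,xᵢ) ∧ dom(x) ∧ dom(f(x₁,...,xₙ))`. -/
def subClauses {P F : Type} (domP subP : P) (Fs : Set (F × ℕ)) : Set (Clause P F) :=
  { ⟨[subAtom subP (Term.var 0) (Term.var 0)], [domAtom domP (Term.var 0)]⟩ } ∪
  { D | ∃ fn ∈ Fs, ∃ i, i < fn.2 ∧
        D = ⟨[subAtom subP (Term.var fn.2) (Term.app fn.1 (rangeVars fn.2))],
             [subAtom subP (Term.var fn.2) (Term.var i),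
              domAtom domP (Term.var fn.2),
              domAtom domP (Term.app fn.1 (rangeVars fn.2))]⟩ }

/-- The subterm domain blocking transformation `blsd`. -/
def blsd {P F : Type} (σ : Sig P F) (domP eqP neqP subP : P) (M : Set (Clause P F)) :
    Set (Clause P F) :=
  M ∪ subClauses domP subP σ.funcs ∪
  { ⟨blockSplitHead eqP neqP, [subAtom subP (Term.var 0) (Term.var 1)]⟩,
    eqNeqBot eqP neqP }

/-- The subterm predicate blocking transformation `blsp`. -/
def blsp {P F : Type} (σ : Sig P F) (domP eqP neqP subP : P) (M : Set (Clause P F)) :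
    Set (Clause P F) :=
  M ∪ subClauses domP subP σ.funcs ∪
  { D | ∃ p : P, (p, 1) ∈ σ.preds ∧
        D = ⟨blockSplitHead eqP neqP,
             [subAtom subP (Term.var 0) (Term.var 1),
              ⟨p, [Term.var 0]⟩, ⟨p, [Term.var 1]⟩]⟩ } ∪
  { eqNeqBot eqP neqP }

/-- The unrestricted predicate blocking transformation `blup`. -/
def blup {P F : Type} (σ : Sig P F) (domP eqP neqP : P) (M : Set (Clause P F)) :
    Set (Clause P F) :=
  M ∪ { D | ∃ p : P, (p, 1) ∈ σ.preds ∧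
        D = ⟨blockSplitHead eqP neqP, [⟨p, [Term.var 0]⟩, ⟨p, [Term.var 1]⟩]⟩ } ∪
  { eqNeqBot eqP neqP }

/-! ### Combined transformations -/

/-- The base transformations `rr`, `sh∘rr`, `crr`, `sh∘crr`
(composition read left-to-right, so `(sh∘rr)(M) = rr(sh(M))`). -/
inductive BaseTr | rr | shrr | crr | shcrr

/-- The optional blocking transformations. -/
inductive BlockTr | id | blsd | blsp | blud | blup

def applyBase {P F : Type} [DecidableEq P] [DecidableEq F] (σ : Sig P F) (domP : P) (c : F)
    (eqP : P) (bar : P → P) : BaseTr → Set (Clause P F) → Set (Clause P F)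
  | .rr, M => rr σ domP c M
  | .shrr, M => rr σ domP c (sh eqP bar M)
  | .crr, M => crr σ domP c M
  | .shcrr, M => crr σ domP c (sh eqP bar M)

def applyBlock {P F : Type} (σ : Sig P F) (domP eqP neqP subP : P) :
    BlockTr → Set (Clause P F) → Set (Clause P F)
  | .id, M => M
  | .blsd, M => blsd σ domP eqP neqP subP M
  | .blsp, M => blsp σ domP eqP neqP subP M
  | .blud, M => blud domP eqP neqP M
  | .blup, M => blup σ domP eqP neqP M

/-- A combined transformation: a base transformation optionally followed by a blocking
transformation (composition read left-to-right). -/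
def applyTr {P F : Type} [DecidableEq P] [DecidableEq F] (σ : Sig P F) (domP : P) (c : F)
    (eqP neqP subP : P) (bar : P → P) (b : BaseTr) (τ : BlockTr) (M : Set (Clause P F)) :
    Set (Clause P F) :=
  applyBlock σ domP eqP neqP subP τ (applyBase σ domP c eqP bar b M)

/-- The clause `x ≈ x ← dom(x)`. -/
def reflDomClause {P F : Type} (domP eqP : P) : Clause P F :=
  ⟨[eqAtom eqP (Term.var 0) (Term.var 0)], [domAtom domP (Term.var 0)]⟩

end BUMG

namespace BUMG

/-! Interpret `dom` as the whole Herbrand universe: extend a model `I` of `M` by every ground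
atom `dom(t)`. Every clause added by `rr` has a `dom` atom in its head and is thus satisfied,
and since `dom` does not occur in `M`, the `dom` atoms added to the bodies of the clauses of `M`
are the only ones the extension makes true, so those clauses remain satisfied. -/

variable {P F : Type}

theorem Term.isGround_subst {g : ℕ → Term F} (hg : GroundSubst g) (t : Term F) :
    (t.subst g).IsGround := by
  induction t using Term.subst.induct with
  | case1 n => simpa [Term.subst] using hg n
  | case2 f ts ih =>
    simp only [Term.subst, Term.IsGround, Term.vars, List.flatMap_eq_nil_iff]
    rintro ⟨s, hs⟩ -
    simp only [List.mem_map, List.mem_attach, true_and, Subtype.exists] at hs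
    obtain ⟨u, hu, rfl⟩ := hs
    exact ih ⟨u, hu⟩

theorem domAtom_isGround (domP : P) {t : Term F} (ht : t.IsGround) :
    (domAtom domP t).IsGround := by
  simpa [domAtom, Atom.IsGround, Atom.vars, Term.IsGround] using ht

def withDom (domP : P) (I : Set (Atom P F)) : Set (Atom P F) :=
  I ∪ {a | ∃ t : Term F, t.IsGround ∧ a = domAtom domP t}

theorem isGround_of_mem_withDom {domP : P} {I : Set (Atom P F)} (hI : ∀ a ∈ I, a.IsGround)
    {a : Atom P F} (ha : a ∈ withDom domP I) : a.IsGround := by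
  rcases ha with ha | ⟨t, ht, rfl⟩
  · exact hI a ha
  · exact domAtom_isGround domP ht

theorem mem_withDom_of_pred_ne {domP : P} {I : Set (Atom P F)} {a : Atom P F}
    (ha : a ∈ withDom domP I) (hpred : a.pred ≠ domP) : a ∈ I := by
  rcases ha with ha | ⟨t, -, rfl⟩
  · exact ha
  · exact absurd rfl hpred

theorem satClause_withDom_of_domAtom_mem_heads {domP : P} (I : Set (Atom P F))
    {C : Clause P F} {t : Term F} (ht : domAtom domP t ∈ C.heads) :
    satClause (withDom domP I) C := by
  intro g hg _
  refine ⟨_, ht, Or.inr ⟨t.subst g, Term.isGround_subst hg t, ?_⟩⟩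
  simp [domAtom, Atom.subst]

theorem satClause_withDom_rangeRestrictClause {domP : P} {I : Set (Atom P F)}
    {C : Clause P F} (hdom : ∀ a ∈ C.body, a.pred ≠ domP) (hC : satClause I C) :
    satClause (withDom domP I) (rangeRestrictClause domP C) := by
  intro g hg hbody
  have hbodyI : ∀ a ∈ C.body, a.subst g ∈ I := fun a ha =>
    mem_withDom_of_pred_ne (hbody a (List.mem_append_left _ ha)) (hdom a ha)
  obtain ⟨a, ha, haI⟩ := hC g hg hbodyI
  exact ⟨a, ha, Or.inl haI⟩

theorem pred_ne_of_wfSet {σ : Sig P F} {domP : P} {M : Set (Clause P F)} (hwf : WFSet σ M)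
    (hdomFresh : ∀ n, (domP, n) ∉ σ.preds) {C : Clause P F} (hC : C ∈ M) :
    ∀ a ∈ C.body, a.pred ≠ domP := by
  intro a ha hpred
  have hmem : (a.pred, a.args.length) ∈ C.preds :=
    List.mem_map.2 ⟨a, List.mem_append_right _ ha, rfl⟩
  exact hdomFresh _ (hpred ▸ (hwf C hC).1 _ hmem)

theorem rr_soundness_general {P F : Type} [DecidableEq P] [DecidableEq F]
    (σ : Sig P F) (domP : P) (c : F) (M : Set (Clause P F))
    (hwf : WFSet σ M)
    (hdomFresh : ∀ n, (domP, n) ∉ σ.preds)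
    (hsat : Satisfiable M) :
    Satisfiable (rr σ domP c M) := by
  obtain ⟨I, hIground, hI⟩ := hsat
  refine ⟨withDom domP I, fun a => isGround_of_mem_withDom hIground, ?_⟩
  rintro D ((⟨C, ((hC | rfl) | ⟨C', -, a, -, i, -, rfl⟩), rfl⟩ | ⟨pn, -, i, -, rfl⟩) |
    ⟨fn, -, i, -, rfl⟩)
  · exact satClause_withDom_rangeRestrictClause (pred_ne_of_wfSet hwf hdomFresh hC) (hI C hC)
  all_goals exact satClause_withDom_of_domAtom_mem_heads I (List.mem_singleton_self _)

/-- **Soundness of range-restriction**: for every clause set `M`,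
if `M` is satisfiable then `rr(M)` is satisfiable. -/
theorem rr_soundness {P F : Type} [DecidableEq P] [DecidableEq F]
    (σ : Sig P F) (domP : P) (c : F) (M : Set (Clause P F))
    (hfin : M.Finite) (hwf : WFSet σ M)
    (hdomFresh : ∀ n, (domP, n) ∉ σ.preds)
    (hsat : Satisfiable M) :
    Satisfiable (rr σ domP c M) :=
  rr_soundness_general σ domP c M hwf hdomFresh hsat

end BUMG
end

section
/- Completeness of range-restriction with respect to E-interpretations: for every clause set M, if rr(M) is E-satisfiable then M is E-satisfiable. -/
/-!
Let `I` be a Herbrand model of `rr(M)` and its equality axioms, and let `Δ` be the set of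
terms `t` with `dom(t) ∈ I`. By the clauses of `rr(M)`, `Δ` contains `c`, the arguments of its
own members and of all true atoms, and it is closed under `≈`. Collapse every ground term
bottom-up into `Δ`, replacing each subterm that would leave `Δ` by `c`, and let a ground atom
be true iff its collapse is true in `I`. For an instance of a clause of `M` with true body, the
Step-(2) clauses force the instance with collapsed values to have all body arguments in `Δ`,
where collapsing commutes with instantiation; so the range-restricted clause fires in `I`, and
the arguments of the true head atom lie in `Δ` again. The equality axioms survive because,
`Δ` being closed under `≈`, congruent terms are collapsed simultaneously.
-/

namespace BUMG

namespace Term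
variable {F : Type}

@[elab_as_elim]
theorem inductionOn {motive : Term F → Prop} (var : ∀ n, motive (Term.var n))
    (app : ∀ f ts, (∀ t ∈ ts, motive t) → motive (Term.app f ts)) : ∀ t, motive t
  | .var n => var n
  | .app f ts => app f ts fun t _ => inductionOn var app t
decreasing_by simp_wf; have := List.sizeOf_lt_of_mem ‹t ∈ ts›; omega

@[simp] theorem subst_var (g : ℕ → Term F) (n : ℕ) : (var n).subst g = g n := by
  simp [subst]

@[simp] theorem subst_app (g : ℕ → Term F) (f : F) (ts : List (Term F)) :
    (app f ts).subst g = app f (ts.map (subst g)) := by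
  rw [subst]; simp

@[simp] theorem vars_var (n : ℕ) : (var n : Term F).vars = [n] := by simp [vars]

@[simp] theorem vars_app (f : F) (ts : List (Term F)) :
    (app f ts).vars = ts.flatMap vars := by
  rw [vars]; simp

@[simp] theorem funcs_app (f : F) (ts : List (Term F)) :
    (app f ts).funcs = (f, ts.length) :: ts.flatMap funcs := by
  rw [funcs]; simp

theorem isGround_app {f : F} {ts : List (Term F)} :
    (app f ts).IsGround ↔ ∀ t ∈ ts, t.IsGround := by
  simp [IsGround, List.flatMap_eq_nil_iff]

theorem isGround_subst_s2 {g : ℕ → Term F} (hg : GroundSubst g) (t : Term F) :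
    (t.subst g).IsGround := by
  induction t using inductionOn with
  | var n => simpa using hg n
  | app f ts ih => simpa [isGround_app] using ih

theorem subst_congr {g g' : ℕ → Term F} (t : Term F) (h : ∀ v ∈ t.vars, g v = g' v) :
    t.subst g = t.subst g' := by
  induction t using inductionOn with
  | var n => simpa using h n
  | app f ts ih =>
    simp only [subst_app, app.injEq, true_and]
    exact List.map_congr_left fun u hu => ih u hu fun v hv =>
      h v (by simpa using ⟨u, hu, hv⟩)

theorem isVar_iff {t : Term F} : t.isVar = true ↔ ∃ n, t = var n := by
  cases t <;> simp [isVar]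

theorem subst_comp_of_isVar (φ : Term F → Term F) (g : ℕ → Term F) {t : Term F}
    (ht : t.isVar) : φ (t.subst g) = t.subst (φ ∘ g) := by
  obtain ⟨n, rfl⟩ := isVar_iff.1 ht
  simp

end Term

namespace Atom
variable {P F : Type}

def mapArgs (φ : Term F → Term F) (a : Atom P F) : Atom P F := ⟨a.pred, a.args.map φ⟩

theorem subst_eq_mapArgs (g : ℕ → Term F) (a : Atom P F) :
    a.subst g = a.mapArgs (Term.subst g) := rfl

theorem mapArgs_mapArgs (φ ψ : Term F → Term F) (a : Atom P F) :
    (a.mapArgs φ).mapArgs ψ = a.mapArgs (ψ ∘ φ) := by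
  simp [mapArgs]

theorem mapArgs_congr {φ ψ : Term F → Term F} {a : Atom P F}
    (h : ∀ t ∈ a.args, φ t = ψ t) : a.mapArgs φ = a.mapArgs ψ := by
  simp only [mapArgs, mk.injEq, true_and]
  exact List.map_congr_left h

theorem isGround_iff {a : Atom P F} : a.IsGround ↔ ∀ t ∈ a.args, t.IsGround := by
  simp [IsGround, vars, Term.IsGround, List.flatMap_eq_nil_iff]

theorem isGround_subst_s2 {g : ℕ → Term F} (hg : GroundSubst g) (a : Atom P F) :
    (a.subst g).IsGround := by
  simpa [isGround_iff, subst] using fun t _ => Term.isGround_subst_s2 hg t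

theorem mapArgs_subst_of_isVar (φ : Term F → Term F) (g : ℕ → Term F) {a : Atom P F}
    (ha : ∀ t ∈ a.args, t.isVar) : (a.subst g).mapArgs φ = a.subst (φ ∘ g) := by
  rw [subst_eq_mapArgs, subst_eq_mapArgs, mapArgs_mapArgs]
  exact mapArgs_congr fun t ht => Term.subst_comp_of_isVar φ g (ha t ht)

end Atom

@[simp] theorem eqAtom_subst {P F : Type} (eqP : P) (g : ℕ → Term F) (s t : Term F) :
    (eqAtom eqP s t).subst g = eqAtom eqP (s.subst g) (t.subst g) := rfl

@[simp] theorem domAtom_subst {P F : Type} (domP : P) (g : ℕ → Term F) (t : Term F) :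
    (domAtom domP t).subst g = domAtom domP (t.subst g) := rfl

@[simp] theorem mapArgs_eqAtom {P F : Type} (φ : Term F → Term F) (eqP : P) (s t : Term F) :
    (eqAtom eqP s t).mapArgs φ = eqAtom eqP (φ s) (φ t) := rfl

namespace Clause
variable {P F : Type}

theorem le_maxVar {C : Clause P F} {v : ℕ} (h : v ∈ C.vars) : v ≤ C.maxVar := by
  unfold maxVar
  generalize C.vars = l at h ⊢
  induction l with
  | nil => simp at h
  | cons w l ih =>
    rcases List.mem_cons.1 h with rfl | h
    · exact le_max_left _ _
    · exact (ih h).trans (le_max_right _ _)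

theorem mem_vars {C : Clause P F} {a : Atom P F} {t : Term F} {v : ℕ}
    (ha : a ∈ C.atoms) (ht : t ∈ a.args) (hv : v ∈ t.vars) : v ∈ C.vars := by
  simp only [vars, Atom.vars, List.mem_flatMap]
  exact ⟨a, ha, t, ht, hv⟩

theorem mem_funcs {C : Clause P F} {a : Atom P F} {t : Term F} {fn : F × ℕ}
    (ha : a ∈ C.atoms) (ht : t ∈ a.args) (hfn : fn ∈ t.funcs) : fn ∈ C.funcs := by
  simp only [funcs, Atom.funcs, List.mem_flatMap]
  exact ⟨a, ha, t, ht, hfn⟩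

end Clause

section Satisfaction
variable {P F : Type} {I : Set (Atom P F)}

theorem satClause.head_mem {h : Atom P F} {B : List (Atom P F)} (hC : satClause I ⟨[h], B⟩)
    {g : ℕ → Term F} (hg : GroundSubst g) (hB : ∀ a ∈ B, a.subst g ∈ I) :
    h.subst g ∈ I := by
  obtain ⟨a, ha, haI⟩ := hC g hg hB
  rwa [List.mem_singleton.1 ha] at haI

theorem satClause.of_rangeRestrictClause [DecidableEq P] {domP : P} {C : Clause P F}
    (hC : satClause I (rangeRestrictClause domP C)) {g : ℕ → Term F} (hg : GroundSubst g)
    (hgdom : ∀ v, domAtom domP (g v) ∈ I) (hB : ∀ a ∈ C.body, a.subst g ∈ I) :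
    ∃ a ∈ C.heads, a.subst g ∈ I := by
  refine hC g hg fun a ha => ?_
  simp only [rangeRestrictClause, List.mem_append, List.mem_map] at ha
  rcases ha with ha | ⟨v, -, rfl⟩
  exacts [hB a ha, by simpa using hgdom v]

def listSubst (us : List (Term F)) (d : Term F) : ℕ → Term F := fun j => us.getD j d

theorem groundSubst_listSubst {us : List (Term F)} {d : Term F}
    (hus : ∀ u ∈ us, u.IsGround) (hd : d.IsGround) : GroundSubst (listSubst us d) := by
  intro j
  rcases lt_or_ge j us.length with hj | hj
  · simpa [listSubst, List.getElem?_eq_getElem hj] using hus _ (List.getElem_mem hj)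
  · simpa [listSubst, List.getElem?_eq_none hj] using hd

theorem map_subst_rangeVars_listSubst (us : List (Term F)) (d : Term F) :
    (rangeVars us.length).map (Term.subst (listSubst us d)) = us := by
  refine List.ext_getElem (by simp [rangeVars]) fun i _ h2 => ?_
  simp [rangeVars, listSubst, List.getElem?_eq_getElem h2]

theorem domAtom_getElem_mem {domP : P} {i : ℕ} {A : Atom P F}
    (hC : satClause I ⟨[domAtom domP (Term.var i)], [A]⟩) {us : List (Term F)} {d : Term F}
    (hus : ∀ u ∈ us, u.IsGround) (hd : d.IsGround) (hi : i < us.length)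
    (hA : A.subst (listSubst us d) ∈ I) : domAtom domP us[i] ∈ I := by
  have := hC.head_mem (groundSubst_listSubst hus hd) (by simpa using hA)
  simpa [listSubst, List.getElem?_eq_getElem hi] using this

end Satisfaction

section Equality
variable {P F : Type} {I : Set (Atom P F)} {eqP : P} {Ps : Set (P × ℕ)} {Fs : Set (F × ℕ)}

theorem EAX_mono {Ps' : Set (P × ℕ)} {Fs' : Set (F × ℕ)} (hPs : Ps ⊆ Ps')
    (hFs : Fs ⊆ Fs') : EAX eqP Ps Fs ⊆ EAX eqP Ps' Fs' := by
  rintro C ((hC | ⟨fn, hfn, rfl⟩) | ⟨pn, hpn, rfl⟩)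
  · exact Or.inl (Or.inl hC)
  · exact Or.inl (Or.inr ⟨fn, hFs hfn, rfl⟩)
  · exact Or.inr ⟨pn, hPs hpn, rfl⟩

theorem eqAtom_self_mem (hI : ∀ C ∈ EAX eqP Ps Fs, satClause I C) {t : Term F}
    (ht : t.IsGround) : eqAtom eqP t t ∈ I := by
  have hC : satClause I ⟨[eqAtom eqP (.var 0) (.var 0)], []⟩ := hI _ (Or.inl (Or.inl (by simp)))
  simpa using hC.head_mem (g := fun _ => t) (fun _ => ht) (by simp)

theorem eqAtom_symm_mem (hI : ∀ C ∈ EAX eqP Ps Fs, satClause I C) {s t : Term F}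
    (hs : s.IsGround) (ht : t.IsGround) (h : eqAtom eqP s t ∈ I) : eqAtom eqP t s ∈ I := by
  have hC : satClause I ⟨[eqAtom eqP (.var 1) (.var 0)], [eqAtom eqP (.var 0) (.var 1)]⟩ :=
    hI _ (Or.inl (Or.inl (by simp)))
  simpa using hC.head_mem (g := fun n => if n = 0 then s else t)
    (fun n => by dsimp only; split <;> assumption) (by simpa using h)

theorem unary_mem_of_eqAtom_mem (hI : ∀ C ∈ EAX eqP Ps Fs, satClause I C) {p : P}
    (hp : (p, 1) ∈ Ps) {s t : Term F} (hs : s.IsGround) (ht : t.IsGround)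
    (h : ⟨p, [s]⟩ ∈ I) (hst : eqAtom eqP s t ∈ I) : ⟨p, [t]⟩ ∈ I := by
  have hC := hI _ (Or.inr ⟨(p, 1), hp, rfl⟩)
  simpa [ysList, Atom.subst] using hC.head_mem (g := fun n => if n = 0 then s else t)
    (fun n => by dsimp only; split <;> assumption)
    (by simpa [xsList, eqConjList, eqAtom, Atom.subst] using ⟨h, hst⟩)

end Equality

section Collapse
variable {P F : Type}

theorem cTerm_isGround (c : F) : (cTerm c).IsGround := by
  simp [cTerm, Term.IsGround]

open Classical in
noncomputable def collapse (Δ : Set (Term F)) (c : F) : Term F → Term F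
  | .var _ => cTerm c
  | .app f ts =>
    if Term.app f (ts.attach.map fun t => collapse Δ c t.1) ∈ Δ then
      Term.app f (ts.attach.map fun t => collapse Δ c t.1)
    else cTerm c
decreasing_by all_goals simp_wf; have := List.sizeOf_lt_of_mem t.2; omega

variable {Δ : Set (Term F)} {c : F}

@[simp] theorem collapse_var (n : ℕ) : collapse Δ c (Term.var n) = cTerm c := by
  rw [collapse]

open Classical in
theorem collapse_app (f : F) (ts : List (Term F)) :
    collapse Δ c (Term.app f ts) =
      if Term.app f (ts.map (collapse Δ c)) ∈ Δ then Term.app f (ts.map (collapse Δ c))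
      else cTerm c := by
  rw [collapse]; simp

theorem collapse_isGround (t : Term F) : (collapse Δ c t).IsGround := by
  induction t using Term.inductionOn with
  | var n => simpa using cTerm_isGround c
  | app f ts ih =>
    rw [collapse_app]
    split
    · simpa [Term.isGround_app] using ih
    · exact cTerm_isGround c

theorem collapse_mem (hc : cTerm c ∈ Δ) (t : Term F) : collapse Δ c t ∈ Δ := by
  cases t with
  | var n => simpa using hc
  | app f ts => rw [collapse_app]; split <;> assumption

def ArgClosed (Fs : Set (F × ℕ)) (Δ : Set (Term F)) : Prop :=
  ∀ f us, (f, us.length) ∈ Fs → Term.app f us ∈ Δ → ∀ u ∈ us, u ∈ Δ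

/-- All subterms of the collapsed instance lie in `Δ`, so collapsing never cuts them off. -/
theorem collapse_subst {Fs : Set (F × ℕ)} (hΔ : ArgClosed Fs Δ) (g : ℕ → Term F)
    (t : Term F) (ht : ∀ fn ∈ t.funcs, fn ∈ Fs)
    (hmem : t.subst (collapse Δ c ∘ g) ∈ Δ) :
    collapse Δ c (t.subst g) = t.subst (collapse Δ c ∘ g) := by
  induction t using Term.inductionOn with
  | var n => simp
  | app f ts ih =>
    rw [Term.subst_app] at hmem
    have hargs : ∀ u ∈ ts, u.subst (collapse Δ c ∘ g) ∈ Δ := fun u hu =>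
      hΔ f _ (by simpa using ht _ (by simp)) hmem _ (List.mem_map_of_mem hu)
    have hmap :
        ts.map (collapse Δ c ∘ Term.subst g) = ts.map (Term.subst (collapse Δ c ∘ g)) :=
      List.map_congr_left fun u hu => ih u hu
        (fun fn hfn => ht fn (by simpa using Or.inr ⟨u, hu, hfn⟩)) (hargs u hu)
    rw [Term.subst_app, collapse_app, List.map_map, hmap, if_pos hmem, Term.subst_app]

theorem mapArgs_collapse_subst {Fs : Set (F × ℕ)} (hΔ : ArgClosed Fs Δ) (g : ℕ → Term F)
    {a : Atom P F} (ha : ∀ t ∈ a.args, ∀ fn ∈ t.funcs, fn ∈ Fs)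
    (hmem : ∀ t ∈ a.args, t.subst (collapse Δ c ∘ g) ∈ Δ) :
    (a.subst g).mapArgs (collapse Δ c) = a.subst (collapse Δ c ∘ g) := by
  rw [Atom.subst_eq_mapArgs, Atom.subst_eq_mapArgs, Atom.mapArgs_mapArgs]
  exact Atom.mapArgs_congr fun t ht => collapse_subst hΔ g t (ha t ht) (hmem t ht)

open Classical in
theorem collapse_subst_app_of_isVar (g : ℕ → Term F) (f : F) {ts : List (Term F)}
    (hts : ∀ t ∈ ts, t.isVar) :
    collapse Δ c ((Term.app f ts).subst g) =
      if (Term.app f ts).subst (collapse Δ c ∘ g) ∈ Δ then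
        (Term.app f ts).subst (collapse Δ c ∘ g)
      else cTerm c := by
  have hmap :
      (ts.map (Term.subst g)).map (collapse Δ c) = ts.map (Term.subst (collapse Δ c ∘ g)) := by
    rw [List.map_map]
    exact List.map_congr_left fun t ht => Term.subst_comp_of_isVar _ g (hts t ht)
  rw [Term.subst_app, collapse_app, hmap, Term.subst_app]

end Collapse

section Preimage
variable {P F : Type} {I : Set (Atom P F)}

def preimageInterp (φ : Term F → Term F) (I : Set (Atom P F)) : Set (Atom P F) :=
  {a | a.IsGround ∧ a.mapArgs φ ∈ I}

theorem satClause_preimageInterp {φ : Term F → Term F} (hφ : ∀ t, (φ t).IsGround)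
    {C : Clause P F} (hC : satClause I C) (hbody : ∀ a ∈ C.body, ∀ t ∈ a.args, t.isVar)
    (hheads : ∀ g, GroundSubst g → ∀ a ∈ C.heads, a.subst (φ ∘ g) ∈ I →
      (a.subst g).mapArgs φ ∈ I) :
    satClause (preimageInterp φ I) C := by
  intro g hg hB
  obtain ⟨a, ha, haI⟩ := hC (φ ∘ g) (fun n => hφ (g n)) fun b hb => by
    rw [← Atom.mapArgs_subst_of_isVar φ g (hbody b hb)]
    exact (hB b hb).2
  exact ⟨a, ha, Atom.isGround_subst_s2 hg a, hheads g hg a ha haI⟩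

theorem satClause_preimageInterp_of_isVar {φ : Term F → Term F} (hφ : ∀ t, (φ t).IsGround)
    {C : Clause P F} (hC : satClause I C) (hvar : ∀ a ∈ C.atoms, ∀ t ∈ a.args, t.isVar) :
    satClause (preimageInterp φ I) C :=
  satClause_preimageInterp hφ hC (fun a ha => hvar a (List.mem_append_right _ ha))
    fun g _ a ha haI => by
      rwa [Atom.mapArgs_subst_of_isVar φ g (hvar a (List.mem_append_left _ ha))]

theorem satClause_preimageInterp_collapse_of_mem_EAX {eqP : P} {Ps : Set (P × ℕ)}
    {Fs : Set (F × ℕ)} (hI : ∀ C ∈ EAX eqP Ps Fs, satClause I C) {Δ : Set (Term F)} {c : F}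
    (hΔ : ∀ s t, eqAtom eqP s t ∈ I → (s ∈ Δ ↔ t ∈ Δ)) {C : Clause P F}
    (hC : C ∈ EAX eqP Ps Fs) : satClause (preimageInterp (collapse Δ c) I) C := by
  have hCI := hI C hC
  rcases hC with (hC | ⟨fn, -, rfl⟩) | ⟨pn, -, rfl⟩
  · refine satClause_preimageInterp_of_isVar collapse_isGround hCI ?_
    simp only [Set.mem_insert_iff, Set.mem_singleton_iff] at hC
    rcases hC with rfl | rfl | rfl <;> simp [Clause.atoms, eqAtom, Term.isVar]
  · -- `Δ` respects `≈`, so `f(s̄)` and `f(t̄)` are both kept or both collapsed to `c`.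
    refine satClause_preimageInterp collapse_isGround hCI
      (by simp [eqConjList, eqAtom, Term.isVar]) fun g _ a ha haI => ?_
    have hxs : ∀ t ∈ xsList (F := F) fn.2, t.isVar := by simp [xsList, Term.isVar]
    have hys : ∀ t ∈ ysList (F := F) fn.2, t.isVar := by simp [ysList, Term.isVar]
    rw [List.mem_singleton.1 ha, eqAtom_subst] at haI ⊢
    rw [mapArgs_eqAtom, collapse_subst_app_of_isVar g _ hxs, collapse_subst_app_of_isVar g _ hys]
    set u := (Term.app fn.1 (xsList fn.2)).subst (collapse Δ c ∘ g)
    set v := (Term.app fn.1 (ysList fn.2)).subst (collapse Δ c ∘ g)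
    by_cases hu : u ∈ Δ
    · rwa [if_pos hu, if_pos ((hΔ u v haI).1 hu)]
    · rw [if_neg hu, if_neg (mt (hΔ u v haI).2 hu)]
      exact eqAtom_self_mem hI (cTerm_isGround c)
  · refine satClause_preimageInterp_of_isVar collapse_isGround hCI ?_
    simp [Clause.atoms, xsList, ysList, eqConjList, eqAtom, Term.isVar]

end Preimage

section RangeRestriction
variable {P F : Type} {σ : Sig P F} {domP : P} {c : F} {M : Set (Clause P F)}

theorem atoms_subset_rangeRestrictClause (C : Clause P F) :
    C.atoms ⊆ (rangeRestrictClause domP C).atoms := by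
  intro a
  simp only [Clause.atoms, rangeRestrictClause, List.mem_append]
  tauto

theorem rangeRestrictClause_domcClause :
    rangeRestrictClause domP (domcClause domP c) = (domcClause domP c : Clause P F) := by
  simp [rangeRestrictClause, domcClause, Clause.headVars, Atom.vars, domAtom, cTerm]

theorem map_subst_abstrArgs (base : ℕ) {ts : List (Term F)} {τ : ℕ → Term F}
    {h : Term F → Term F} (hvar : ∀ n, Term.var n ∈ ts → τ n = h (.var n))
    (hfresh : ∀ j (hj : j < ts.length), τ (base + j) = h ts[j]) :
    (abstrArgs base ts).map (Term.subst τ) = ts.map h := by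
  refine List.ext_getElem (by simp [abstrArgs]) fun j _ hj => ?_
  rw [List.length_map] at hj
  simp only [abstrArgs, List.getElem_map, List.getElem_mapIdx]
  split_ifs with hv
  · obtain ⟨n, hn⟩ := Term.isVar_iff.1 hv
    rw [hn, Term.subst_var, hvar n (hn ▸ List.getElem_mem hj)]
  · rw [Term.subst_var, hfresh j hj]

def domTerms (domP : P) (I : Set (Atom P F)) : Set (Term F) := {t | domAtom domP t ∈ I}

variable {I : Set (Atom P F)}

@[simp] theorem mem_domTerms {t : Term F} : t ∈ domTerms domP I ↔ domAtom domP t ∈ I :=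
  Iff.rfl

variable [DecidableEq P] [DecidableEq F]

theorem rangeRestrictClause_mem_rr {C : Clause P F}
    (hC : C ∈ M ∪ {domcClause domP c} ∪ step2Set domP M) :
    rangeRestrictClause domP C ∈ rr σ domP c M :=
  Or.inl (Or.inl (Set.mem_image_of_mem _ hC))

theorem predsOf_subset_rr : predsOf M ⊆ predsOf (rr σ domP c M) := by
  rintro pn ⟨C, hC, hpn⟩
  refine ⟨_, rangeRestrictClause_mem_rr (Or.inl (Or.inl hC)), ?_⟩
  obtain ⟨a, ha, rfl⟩ := List.mem_map.1 hpn
  exact List.mem_map_of_mem (atoms_subset_rangeRestrictClause C ha)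

theorem funcsOf_subset_rr : funcsOf M ⊆ funcsOf (rr σ domP c M) := by
  rintro fn ⟨C, hC, hfn⟩
  refine ⟨_, rangeRestrictClause_mem_rr (Or.inl (Or.inl hC)), ?_⟩
  obtain ⟨a, ha, hfn⟩ := List.mem_flatMap.1 hfn
  exact List.mem_flatMap.2 ⟨a, atoms_subset_rangeRestrictClause C ha, hfn⟩

theorem dom_mem_predsOf_rr : (domP, 1) ∈ predsOf (rr σ domP c M) := by
  refine ⟨domcClause domP c, ?_, by simp [Clause.preds, Clause.atoms, domcClause, domAtom]⟩
  rw [← rangeRestrictClause_domcClause]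
  exact rangeRestrictClause_mem_rr (Or.inl (Or.inr rfl))

theorem cTerm_mem_domTerms (hI : ∀ C ∈ rr σ domP c M, satClause I C) :
    cTerm c ∈ domTerms domP I := by
  have hC := hI _ (rangeRestrictClause_mem_rr (Or.inl (Or.inr rfl)))
  rw [rangeRestrictClause_domcClause] at hC
  simpa [domcClause, cTerm] using
    hC.head_mem (g := fun _ => cTerm c) (fun _ => cTerm_isGround c) (by simp)

theorem mem_domTerms_of_mem_args (hIg : ∀ a ∈ I, a.IsGround)
    (hI : ∀ C ∈ rr σ domP c M, satClause I C) {p : P} {us : List (Term F)}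
    (hp : (p, us.length) ∈ σ.preds) (h : ⟨p, us⟩ ∈ I) {u : Term F} (hu : u ∈ us) :
    u ∈ domTerms domP I := by
  obtain ⟨i, hi, rfl⟩ := List.getElem_of_mem hu
  exact domAtom_getElem_mem (hI _ (Or.inl (Or.inr ⟨_, hp, i, hi, rfl⟩)))
    (Atom.isGround_iff.1 (hIg _ h)) (cTerm_isGround c) hi
    (by simpa [Atom.subst, map_subst_rangeVars_listSubst] using h)

theorem argClosed_domTerms (hIg : ∀ a ∈ I, a.IsGround)
    (hI : ∀ C ∈ rr σ domP c M, satClause I C) : ArgClosed σ.funcs (domTerms domP I) := by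
  intro f us hf h u hu
  obtain ⟨i, hi, rfl⟩ := List.getElem_of_mem hu
  have hus : ∀ u ∈ us, u.IsGround := by
    simpa [domAtom, Atom.isGround_iff, Term.isGround_app] using hIg _ (mem_domTerms.1 h)
  exact domAtom_getElem_mem (hI _ (Or.inr ⟨_, hf, i, hi, rfl⟩)) hus (cTerm_isGround c) hi
    (by simpa [map_subst_rangeVars_listSubst] using h)

theorem subst_mem_domTerms_of_mem_body (hI : ∀ C ∈ rr σ domP c M, satClause I C)
    {C : Clause P F} (hC : C ∈ M) {a : Atom P F} (ha : a ∈ C.body) {g : ℕ → Term F}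
    (hg : GroundSubst g) (hgdom : ∀ n, g n ∈ domTerms domP I) {h : Term F → Term F}
    (hh : ∀ t, (h t).IsGround) (hhdom : ∀ t, h t ∈ domTerms domP I)
    (hvar : ∀ n, h (.var n) = g n) (hmem : a.mapArgs h ∈ I) {t : Term F} (ht : t ∈ a.args) :
    t.subst g ∈ domTerms domP I := by
  cases hv : t.isVar
  · obtain ⟨i, hi, rfl⟩ := List.getElem_of_mem ht
    have hlt : ∀ t ∈ a.args, ∀ v ∈ t.vars, v < C.maxVar + 1 := fun t ht v hv =>
      Nat.lt_succ_of_le (Clause.le_maxVar (Clause.mem_vars (List.mem_append_right _ ha) ht hv))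
    -- instantiates the Step-(2) clause for `a.args[i]`: `g` on the variables of `C`, and
    -- `h` of the `j`-th argument on the abstraction variable `C.maxVar + 1 + j`
    let τ : ℕ → Term F := fun n =>
      if n < C.maxVar + 1 then g n else h (a.args.getD (n - (C.maxVar + 1)) (.var 0))
    have hτ : GroundSubst τ := fun n => by
      dsimp only [τ]; split; exacts [hg n, hh _]
    have hτdom : ∀ n, domAtom domP (τ n) ∈ I := fun n => by
      dsimp only [τ]; split; exacts [hgdom n, hhdom _]
    have hD := hI _ (rangeRestrictClause_mem_rr (Or.inr ⟨C, hC, a, ha, ⟨i, hi⟩, hv, rfl⟩))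
    obtain ⟨b, hb, hbI⟩ := hD.of_rangeRestrictClause hτ hτdom <| by
      simp only [List.mem_singleton]
      rintro b rfl
      have hargs : (abstrArgs (C.maxVar + 1) a.args).map (Term.subst τ) = a.args.map h := by
        refine map_subst_abstrArgs _ (fun n hn => ?_) fun j hj => ?_
        · dsimp only [τ]
          rw [if_pos (hlt _ hn n (by simp)), hvar]
        · dsimp only [τ]
          rw [if_neg (by omega), Nat.add_sub_cancel_left, List.getD_eq_getElem _ _ hj]
      rwa [Atom.subst, hargs]
    have hsubst : a.args[i].subst τ = a.args[i].subst g :=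
      Term.subst_congr _ fun v hv => if_pos (hlt _ (List.getElem_mem hi) v hv)
    rwa [List.mem_singleton.1 hb, domAtom_subst, List.get_eq_getElem, hsubst] at hbI
  · obtain ⟨n, rfl⟩ := Term.isVar_iff.1 hv
    simpa using hgdom n

theorem mem_domTerms_iff_of_eqAtom_mem (hIg : ∀ a ∈ I, a.IsGround) {eqP : P}
    {Fs : Set (F × ℕ)} (hI : ∀ C ∈ EAX eqP (predsOf (rr σ domP c M)) Fs, satClause I C)
    {s t : Term F} (h : eqAtom eqP s t ∈ I) :
    s ∈ domTerms domP I ↔ t ∈ domTerms domP I := by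
  have hst : ∀ u ∈ [s, t], u.IsGround := Atom.isGround_iff.1 (hIg _ h)
  have hs := hst s (by simp)
  have ht := hst t (by simp)
  exact ⟨fun hsdom => unary_mem_of_eqAtom_mem hI dom_mem_predsOf_rr hs ht hsdom h,
    fun htdom => unary_mem_of_eqAtom_mem hI dom_mem_predsOf_rr ht hs htdom
      (eqAtom_symm_mem hI hs ht h)⟩

theorem satClause_preimageInterp_collapse_of_mem (hIg : ∀ a ∈ I, a.IsGround)
    (hI : ∀ C ∈ rr σ domP c M, satClause I C) (hwf : WFSet σ M) {C : Clause P F}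
    (hC : C ∈ M) : satClause (preimageInterp (collapse (domTerms domP I) c) I) C := by
  set cl := collapse (domTerms domP I) c
  have hΔ : ArgClosed σ.funcs (domTerms domP I) := argClosed_domTerms hIg hI
  have hcldom : ∀ t, cl t ∈ domTerms domP I := collapse_mem (cTerm_mem_domTerms hI)
  have hfuncs : ∀ a ∈ C.atoms, ∀ t ∈ a.args, ∀ fn ∈ t.funcs, fn ∈ σ.funcs :=
    fun a ha t ht fn hfn => (hwf C hC).2 fn (Clause.mem_funcs ha ht hfn)
  intro g hg hB
  have hg' : GroundSubst (cl ∘ g) := fun n => collapse_isGround _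
  have hbody : ∀ a ∈ C.body, a.subst (cl ∘ g) ∈ I := fun a ha => by
    have hargs : ∀ t ∈ a.args, t.subst (cl ∘ g) ∈ domTerms domP I :=
      fun t => subst_mem_domTerms_of_mem_body hI hC ha hg' (fun n => hcldom _)
        (h := cl ∘ Term.subst g) (fun t => collapse_isGround _) (fun t => hcldom _)
        (fun n => by simp) (by rw [← Atom.mapArgs_mapArgs]; exact (hB a ha).2)
    rw [← mapArgs_collapse_subst hΔ g (hfuncs a (List.mem_append_right _ ha)) hargs]
    exact (hB a ha).2
  have hCrr := hI _ (rangeRestrictClause_mem_rr (Or.inl (Or.inl hC)))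
  obtain ⟨b, hb, hbI⟩ := hCrr.of_rangeRestrictClause hg' (fun n => hcldom _) hbody
  have hbp : (b.pred, (b.subst (cl ∘ g)).args.length) ∈ σ.preds := by
    simpa [Atom.subst] using (hwf C hC).1 _ (List.mem_map_of_mem (List.mem_append_left _ hb))
  refine ⟨b, hb, Atom.isGround_subst_s2 hg b, ?_⟩
  rwa [mapArgs_collapse_subst hΔ g (hfuncs b (List.mem_append_left _ hb))
    fun t ht => mem_domTerms_of_mem_args hIg hI hbp hbI (List.mem_map_of_mem ht)]

end RangeRestriction

theorem rr_E_completeness_general {P F : Type} [DecidableEq P] [DecidableEq F]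
    (σ : Sig P F) (domP : P) (c : F) (eqP : P) (M : Set (Clause P F))
    (hwf : WFSet σ M)
    (hsat : ESatisfiable eqP (rr σ domP c M)) :
    ESatisfiable eqP M := by
  obtain ⟨I, hIg, hI⟩ := hsat
  have hIrr : ∀ C ∈ rr σ domP c M, satClause I C := fun C hC => hI C (Or.inl hC)
  have hIeq : ∀ C ∈ EAX eqP (predsOf (rr σ domP c M)) (funcsOf (rr σ domP c M)),
      satClause I C := fun C hC => hI C (Or.inr hC)
  refine ⟨preimageInterp (collapse (domTerms domP I) c) I, fun a ha => ha.1, ?_⟩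
  rintro C (hC | hC)
  · exact satClause_preimageInterp_collapse_of_mem hIg hIrr hwf hC
  · exact satClause_preimageInterp_collapse_of_mem_EAX hIeq
      (fun s t => mem_domTerms_iff_of_eqAtom_mem hIg hIeq)
      (EAX_mono predsOf_subset_rr funcsOf_subset_rr hC)

/-- **Completeness of range-restriction w.r.t. E-interpretations** (Corollary 1):
for every clause set `M`, if `rr(M)` is E-satisfiable then `M` is E-satisfiable. -/
theorem rr_E_completeness {P F : Type} [DecidableEq P] [DecidableEq F]
    (σ : Sig P F) (domP : P) (c : F) (eqP : P) (M : Set (Clause P F))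
    (hfin : M.Finite) (hwf : WFSet σ M)
    (hdomFresh : ∀ n, (domP, n) ∉ σ.preds)
    (heq : (eqP, 2) ∈ σ.preds)
    (hsat : ESatisfiable eqP (rr σ domP c M)) :
    ESatisfiable eqP M :=
  rr_E_completeness_general σ domP c eqP M hwf hsat

end BUMG
end
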